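/- Let G be a group acting by isometries on a lattice L of signature (1, r-1), and suppose G contains an element of infinite order. Then for any D ∈ L with q(D,D) > 0, the G-orbit of D is infinite. -/

import Mathlib

/-! If the orbit of `D` were finite, some power `h = g ^ n`, `n > 0`, would fix a vector `D'` of
the orbit, and `q D' D' = q D D > 0`. By the signature, `q` is negative definite on the orthogonal
of `D'`, so `h` preserves the positive definite form `2 q(x, D') q(y, D') - q(D', D') q(x, y)`.
A positive definite form takes values below any bound at only finitely many lattice vectors, so
the images of the standard basis under the powers of `h` range over a finite set: `h`, and hence
`g`, has finite order. -/

open Module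
open LinearMap (BilinForm)

theorem Int.finite_setOf_cast_sq_le {K : Type*} [Field K] [LinearOrder K] [IsStrictOrderedRing K]
    [FloorRing K] (N : K) : {z : ℤ | (z : K) ^ 2 ≤ N}.Finite := by
  refine (Set.finite_Icc (-⌈N⌉) ⌈N⌉).subset fun z (hz : (z : K) ^ 2 ≤ N) => ?_
  have hle : ∀ y : ℤ, y ≤ z ^ 2 → y ≤ ⌈N⌉ := fun y hy => Int.cast_le.mp <|
    calc (y : K) ≤ (z : K) ^ 2 := mod_cast hy
      _ ≤ N := hz
      _ ≤ ⌈N⌉ := Int.le_ceil N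
  exact ⟨neg_le.mp (hle _ (by nlinarith [Int.le_self_sq (-z)])), hle _ (Int.le_self_sq z)⟩

namespace LinearMap.BilinForm

variable {K V ι : Type*} [Field K] [AddCommGroup V] [Module K V]

theorem apply_eq_sum_of_isOrthoᵢ [Fintype ι] {B : BilinForm K V} {v : Basis ι K V}
    (hv : B.IsOrthoᵢ v) (x y : V) :
    B x y = ∑ i, v.repr x i * v.repr y i * B (v i) (v i) := by
  conv_lhs => rw [← v.sum_repr x, ← v.sum_repr y]
  simp only [map_sum, map_smul, LinearMap.sum_apply, LinearMap.smul_apply, smul_eq_mul]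
  refine Finset.sum_congr rfl fun i _ => ?_
  rw [Finset.sum_eq_single i (fun j _ hji => by rw [hv hji, mul_zero]) (by simp)]
  ring

/-- `B E E` times the form that agrees with `B` on `K ∙ E` and with `-B` on its `B`-orthogonal:
a majorant of `B` in Siegel's sense. -/
def majorant (B : BilinForm K V) (E : V) : BilinForm K V :=
  (2 : K) • (B.flip E).smulRight (B.flip E) - B E E • B

theorem majorant_apply (B : BilinForm K V) (E x y : V) :
    B.majorant E x y = 2 * (B x E * B y E) - B E E * B x y := by
  simp [majorant]

theorem IsSymm.majorant {B : BilinForm K V} (hB : B.IsSymm) (E : V) : (B.majorant E).IsSymm :=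
  ⟨fun x y => by simp only [majorant_apply, hB.eq x y]; ring⟩

variable [LinearOrder K] [IsStrictOrderedRing K]

section Signature

variable {B : BilinForm K V} {b : Basis ι K V} {i₀ : ι}

theorem apply_self_neg_of_repr_eq_zero [Fintype ι] (hb : B.IsOrthoᵢ b)
    (hneg : ∀ i, i ≠ i₀ → B (b i) (b i) < 0) {x : V} (hx : x ≠ 0)
    (hxi₀ : b.repr x i₀ = 0) : B x x < 0 := by
  obtain ⟨j, hj⟩ : ∃ j, b.repr x j ≠ 0 := by
    by_contra! h
    exact hx (b.repr.injective (Finsupp.ext fun j => by simp [h j]))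
  have hji₀ : j ≠ i₀ := by rintro rfl; exact hj hxi₀
  have hterm : ∀ i, b.repr x i * b.repr x i * B (b i) (b i) ≤ 0 := fun i => by
    rcases eq_or_ne i i₀ with rfl | hi
    · simp [hxi₀]
    · exact mul_nonpos_of_nonneg_of_nonpos (mul_self_nonneg _) (hneg i hi).le
  rw [apply_eq_sum_of_isOrthoᵢ hb]
  calc ∑ i, b.repr x i * b.repr x i * B (b i) (b i)
      < ∑ _i : ι, (0 : K) :=
        Finset.sum_lt_sum (fun i _ => hterm i)
          ⟨j, Finset.mem_univ j, mul_neg_of_pos_of_neg (mul_self_pos.2 hj) (hneg j hji₀)⟩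
    _ = 0 := Finset.sum_const_zero

theorem apply_self_neg_of_apply_eq_zero [Fintype ι] (hB : B.IsSymm) (hb : B.IsOrthoᵢ b)
    (hneg : ∀ i, i ≠ i₀ → B (b i) (b i) < 0) {E w : V} (hE : 0 < B E E)
    (hwE : B w E = 0) (hw : w ≠ 0) : B w w < 0 := by
  have hEw : B E w = 0 := by rw [← hB.eq, hwE]
  have hE0 : E ≠ 0 := by rintro rfl; simp at hE
  have hEi₀ : b.repr E i₀ ≠ 0 := fun h =>
    (apply_self_neg_of_repr_eq_zero hb hneg hE0 h).not_gt hE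
  by_contra! hww
  -- a combination of `E` and `w` with vanishing `i₀`-coordinate, on which `B` is nonnegative
  set x := b.repr w i₀ • E - b.repr E i₀ • w with hx
  have hxx : B x x = b.repr w i₀ ^ 2 * B E E + b.repr E i₀ ^ 2 * B w w := by
    simp only [hx, map_sub, map_smul, LinearMap.sub_apply, LinearMap.smul_apply, smul_eq_mul,
      hEw, hwE]
    ring
  have hxi₀ : b.repr x i₀ = 0 := by simp [hx, mul_comm]
  have hx0 : x ≠ 0 := by
    intro h
    have hBxE : B x E = b.repr w i₀ * B E E := by simp [hx, hwE]
    rw [h, map_zero, LinearMap.zero_apply, eq_comm, mul_eq_zero] at hBxE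
    have hwi₀ : b.repr w i₀ = 0 := hBxE.resolve_right hE.ne'
    rw [hx, hwi₀, zero_smul, zero_sub, neg_eq_zero, smul_eq_zero] at h
    exact hw (h.resolve_left hEi₀)
  have := apply_self_neg_of_repr_eq_zero hb hneg hx0 hxi₀
  rw [hxx] at this
  nlinarith [sq_nonneg (b.repr w i₀), sq_nonneg (b.repr E i₀)]

theorem majorant_apply_self_pos [Fintype ι] (hB : B.IsSymm) (hb : B.IsOrthoᵢ b)
    (hneg : ∀ i, i ≠ i₀ → B (b i) (b i) < 0) {E : V} (hE : 0 < B E E) {x : V} (hx : x ≠ 0) :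
    0 < B.majorant E x x := by
  set α := B x E / B E E
  set w := x - α • E with hw
  have hxE : B x E = α * B E E := (div_mul_cancel₀ _ hE.ne').symm
  have hwE : B w E = 0 := by simp [hw, hxE]
  have hxx : B x x = α ^ 2 * B E E + B w w := by
    have hEw : B E w = 0 := by rw [← hB.eq, hwE]
    rw [show x = w + α • E by simp [hw]]
    simp only [map_add, map_smul, LinearMap.add_apply, LinearMap.smul_apply, smul_eq_mul, hwE,
      hEw]
    ring
  have hmaj : B.majorant E x x = α ^ 2 * B E E ^ 2 - B E E * B w w := by
    rw [majorant_apply, hxx, hxE]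
    ring
  rw [hmaj]
  rcases eq_or_ne w 0 with hw0 | hw0
  · have hα : α ≠ 0 := by
      intro hα
      rw [hw, hα, zero_smul, sub_zero] at hw0
      exact hx hw0
    simp only [hw0, map_zero, mul_zero, sub_zero]
    positivity
  · have := apply_self_neg_of_apply_eq_zero hB hb hneg hE hwE hw0
    nlinarith [sq_nonneg α, sq_nonneg (B E E)]

end Signature

theorem exists_sq_le_mul_apply_self [FiniteDimensional K V] {B : BilinForm K V} (hB : B.IsSymm)
    (hpos : ∀ x, x ≠ 0 → 0 < B x x) (ℓ : V →ₗ[K] K) : ∃ C, 0 ≤ C ∧ ∀ x, ℓ x ^ 2 ≤ C * B x x := by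
  obtain ⟨v, hv⟩ := exists_orthogonal_basis (isSymm_iff.mp hB)
  have hμ : ∀ j, 0 < B (v j) (v j) := fun j => hpos _ (v.ne_zero j)
  refine ⟨∑ j, ℓ (v j) ^ 2 / B (v j) (v j),
    Finset.sum_nonneg fun j _ => by have := hμ j; positivity, fun x => ?_⟩
  have hℓx : ℓ x = ∑ j, v.repr x j * ℓ (v j) := by
    conv_lhs => rw [← v.sum_repr x]
    simp only [map_sum, map_smul, smul_eq_mul]
  rw [hℓx, apply_eq_sum_of_isOrthoᵢ hv]
  -- Cauchy–Schwarz, with the weights `B (v j) (v j)` split between the two factors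
  refine Finset.sum_sq_le_sum_mul_sum_of_sq_le_mul _ (fun j _ => by have := hμ j; positivity)
    (fun j _ => mul_nonneg (mul_self_nonneg _) (hμ j).le) fun j _ => le_of_eq ?_
  field_simp [(hμ j).ne']

section Lattice

variable [FloorRing K] [Fintype ι] {B : BilinForm K (ι → K)}

theorem finite_setOf_apply_self_le (hB : B.IsSymm) (hpos : ∀ x, x ≠ 0 → 0 < B x x) (m : K) :
    {x : ι → ℤ | B (fun i => (x i : K)) (fun i => (x i : K)) ≤ m}.Finite := by
  choose C hC₀ hC using fun i => exists_sq_le_mul_apply_self hB hpos (LinearMap.proj i)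
  refine (Set.Finite.pi (t := fun i => {z : ℤ | (z : K) ^ 2 ≤ C i * m})
    fun i => Int.finite_setOf_cast_sq_le _).subset fun x (hx : _ ≤ m) i _ => ?_
  exact (hC i _).trans (mul_le_mul_of_nonneg_left hx (hC₀ i))

theorem finite_setOf_forall_apply_self_eq (hB : B.IsSymm) (hpos : ∀ x, x ≠ 0 → 0 < B x x) :
    {g : (ι → ℤ) ≃ₗ[ℤ] (ι → ℤ) | ∀ x, B (fun i => (g x i : K)) (fun i => (g x i : K)) =
      B (fun i => (x i : K)) (fun i => (x i : K))}.Finite := by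
  set e := Pi.basisFun ℤ ι
  refine ((Set.Finite.pi fun i => finite_setOf_apply_self_le hB hpos
    (B (fun j => (e i j : K)) (fun j => (e i j : K)))).preimage
      (f := fun g i => g (e i)) fun g _ h _ hgh => e.ext' fun i => congrFun hgh i).subset ?_
  intro g hg i _
  exact (hg (e i)).le

theorem isOfFinOrder_of_forall_apply_self_eq (hB : B.IsSymm) (hpos : ∀ x, x ≠ 0 → 0 < B x x)
    {g : (ι → ℤ) ≃ₗ[ℤ] (ι → ℤ)}
    (hg : ∀ x, B (fun i => (g x i : K)) (fun i => (g x i : K)) =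
      B (fun i => (x i : K)) (fun i => (x i : K))) : IsOfFinOrder g := by
  refine finite_powers.mp ((finite_setOf_forall_apply_self_eq hB hpos).subset ?_)
  rintro _ ⟨n, rfl⟩
  induction n with
  | zero => exact fun x => rfl
  | succ n ih =>
    simp only [Set.mem_ofPred_eq] at ih ⊢
    intro x
    rw [pow_succ', LinearEquiv.mul_apply]
    exact (hg _).trans (ih x)

theorem isOfFinOrder_of_apply_eq_self {q : BilinForm K (ι → K)} (hq : q.IsSymm)
    {b : Basis ι K (ι → K)} {i₀ : ι} (hb : q.IsOrthoᵢ b) (hneg : ∀ i, i ≠ i₀ → q (b i) (b i) < 0)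
    {g : (ι → ℤ) ≃ₗ[ℤ] (ι → ℤ)}
    (hg : ∀ x y, q (fun i => (g x i : K)) (fun i => (g y i : K)) =
      q (fun i => (x i : K)) (fun i => (y i : K)))
    {D : ι → ℤ} (hgD : g D = D) (hD : 0 < q (fun i => (D i : K)) (fun i => (D i : K))) :
    IsOfFinOrder g := by
  refine isOfFinOrder_of_forall_apply_self_eq (hq.majorant _)
    (fun x hx => majorant_apply_self_pos hq hb hneg hD hx) fun x => ?_
  have hxD := hg x D
  rw [hgD] at hxD
  simp only [majorant_apply, hg x x, hxD]

end Lattice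

end LinearMap.BilinForm

theorem infinite_orbit_of_group_with_infinite_order_element_general
    (r : ℕ) [NeZero r]
    (q : (Fin r → ℚ) →ₗ[ℚ] (Fin r → ℚ) →ₗ[ℚ] ℚ)
    (hsymm : ∀ x y, q x y = q y x)
    (hsig : ∃ b : Module.Basis (Fin r) ℚ (Fin r → ℚ),
      (∀ i j, i ≠ j → q (b i) (b j) = 0) ∧
      0 < q (b 0) (b 0) ∧ (∀ i : Fin r, i ≠ 0 → q (b i) (b i) < 0))
    (G : Subgroup ((Fin r → ℤ) ≃ₗ[ℤ] (Fin r → ℤ)))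
    (hG : ∀ g ∈ G, ∀ x y : Fin r → ℤ,
      q (fun i => ((g x) i : ℚ)) (fun i => ((g y) i : ℚ)) =
        q (fun i => (x i : ℚ)) (fun i => (y i : ℚ)))
    (hinf : ∃ g ∈ G, ¬ IsOfFinOrder g)
    (D : Fin r → ℤ)
    (hD : 0 < q (fun i => (D i : ℚ)) (fun i => (D i : ℚ))) :
    {x : Fin r → ℤ | ∃ g ∈ G, g D = x}.Infinite := by
  obtain ⟨b, hb, -, hneg⟩ := hsig
  obtain ⟨g, hgG, hg⟩ := hinf
  intro hfin
  obtain ⟨m, n, hmn, hgmn⟩ := hfin.exists_lt_map_eq_of_forall_mem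
    (f := fun k : ℕ => (g ^ k) D) fun k => Set.mem_ofPred.mpr ⟨g ^ k, pow_mem hgG k, rfl⟩
  have hfix : (g ^ (n - m)) ((g ^ m) D) = (g ^ m) D := by
    rw [← LinearEquiv.mul_apply, ← pow_add, Nat.sub_add_cancel hmn.le]
    exact hgmn.symm
  have hDm : 0 < q (fun i => ((g ^ m) D i : ℚ)) (fun i => ((g ^ m) D i : ℚ)) := by
    rwa [hG _ (pow_mem hgG m)]
  exact hg ((LinearMap.BilinForm.isOfFinOrder_of_apply_eq_self
    (LinearMap.BilinForm.isSymm_def.mpr hsymm) hb hneg (hG _ (pow_mem hgG _)) hfix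
    hDm).of_pow (Nat.sub_pos_of_lt hmn).ne')

/-- A group of isometries of a lattice of signature (1, r-1)
containing an element of infinite order has infinite orbit on any class `D`
with `q D D > 0`. -/
theorem infinite_orbit_of_group_with_infinite_order_element
    (r : ℕ) [NeZero r]
    (q : (Fin r → ℚ) →ₗ[ℚ] (Fin r → ℚ) →ₗ[ℚ] ℚ)
    (hsymm : ∀ x y, q x y = q y x)
    (hint : ∀ x y : Fin r → ℤ,
      ∃ k : ℤ, q (fun i => (x i : ℚ)) (fun i => (y i : ℚ)) = (k : ℚ))
    (hsig : ∃ b : Module.Basis (Fin r) ℚ (Fin r → ℚ),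
      (∀ i j, i ≠ j → q (b i) (b j) = 0) ∧
      0 < q (b 0) (b 0) ∧ (∀ i : Fin r, i ≠ 0 → q (b i) (b i) < 0))
    (G : Subgroup ((Fin r → ℤ) ≃ₗ[ℤ] (Fin r → ℤ)))
    (hG : ∀ g ∈ G, ∀ x y : Fin r → ℤ,
      q (fun i => ((g x) i : ℚ)) (fun i => ((g y) i : ℚ)) =
        q (fun i => (x i : ℚ)) (fun i => (y i : ℚ)))
    (hinf : ∃ g ∈ G, ¬ IsOfFinOrder g)
    (D : Fin r → ℤ)
    (hD : 0 < q (fun i => (D i : ℚ)) (fun i => (D i : ℚ))) :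
    {x : Fin r → ℤ | ∃ g ∈ G, g D = x}.Infinite :=
  infinite_orbit_of_group_with_infinite_order_element_general r q hsymm hsig G hG hinf D hD
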